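/- arXiv:1906.00582 — 2 statements merged into one kernel-verified Lean document; each statement's English description precedes it below -/
import Mathlib

section
/- Let $\{B_i\}_{i \ge 1}$ be a positive real sequence such that for all $k \ge 1$, $B_k^{\upsilon} \ge c \cdot \sum_{i=1}^k B_i$, where $c > 0$ and $\upsilon > 1$. Then for all $k \ge 1$, $B_k \ge \big( \frac{\upsilon - 1}{\upsilon} c\, k \big)^{1/(\upsilon - 1)}$. -/
set_option maxHeartbeats 1000000

/-- Convexity / Bernoulli: for `x > 0`, `y ≥ 0`, `1 ≤ υ`,
`x ^ υ + υ * x ^ (υ - 1) * (y - x) ≤ y ^ υ`. -/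
lemma rpow_tangent_le (x y υ : ℝ) (hx : 0 < x) (hy : 0 ≤ y) (hυ : 1 ≤ υ) :
    x ^ υ + υ * x ^ (υ - 1) * (y - x) ≤ y ^ υ := by
  have hs : -1 ≤ y / x - 1 := by
    have : 0 ≤ y / x := div_nonneg hy hx.le
    linarith
  have hB := one_add_mul_self_le_rpow_one_add hs hυ
  have h1 : (1 + (y / x - 1)) ^ υ = y ^ υ / x ^ υ := by
    rw [show 1 + (y / x - 1) = y / x by ring, Real.div_rpow hy hx.le]
  rw [h1] at hB
  have hxυ : 0 < x ^ υ := Real.rpow_pos_of_pos hx _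
  have hmul : (1 + υ * (y / x - 1)) * x ^ υ ≤ y ^ υ := by
    calc (1 + υ * (y / x - 1)) * x ^ υ ≤ (y ^ υ / x ^ υ) * x ^ υ := by
          exact mul_le_mul_of_nonneg_right hB hxυ.le
      _ = y ^ υ := by field_simp
  have hsplit : x ^ υ = x ^ (υ - 1) * x := by
    rw [← Real.rpow_add_one hx.ne']; ring_nf
  calc x ^ υ + υ * x ^ (υ - 1) * (y - x)
      = (1 + υ * (y / x - 1)) * x ^ υ := by
        rw [hsplit]; field_simp
    _ ≤ y ^ υ := hmul

lemma sum_rpow_lb (p : ℝ) (hp : 0 < p) :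
    ∀ k : ℕ, (k : ℝ) ^ (p + 1) ≤ (p + 1) * ∑ i ∈ Finset.Icc 1 k, (i : ℝ) ^ p := by
  intro k
  induction k with
  | zero => simp [Real.zero_rpow (by positivity : p + 1 ≠ 0)]
  | succ n ih =>
    have hx : (0 : ℝ) < (n : ℝ) + 1 := by positivity
    have hstep := rpow_tangent_le ((n : ℝ) + 1) (n : ℝ) (p + 1) hx (Nat.cast_nonneg n)
      (by linarith)
    rw [show p + 1 - 1 = p by ring] at hstep
    rw [Finset.sum_Icc_succ_top (by omega : 1 ≤ n + 1)]
    push_cast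
    push_cast at ih
    nlinarith [hstep, ih]

theorem stmt_2 (B : ℕ → ℝ) (c υ : ℝ)
    (hB : ∀ i : ℕ, 1 ≤ i → 0 < B i)
    (hc : 0 < c) (hυ : 1 < υ)
    (h : ∀ k : ℕ, 1 ≤ k → B k ^ υ ≥ c * ∑ i ∈ Finset.Icc 1 k, B i) :
    ∀ k : ℕ, 1 ≤ k → B k ≥ ((υ - 1) / υ * c * k) ^ (1 / (υ - 1)) := by
  have hυ0 : (0 : ℝ) < υ - 1 := by linarith
  have hυpos : (0 : ℝ) < υ := by linarith
  set p : ℝ := 1 / (υ - 1) with hpdef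
  have hp : 0 < p := by positivity
  set a : ℝ := (υ - 1) / υ * c with hadef
  have ha : 0 < a := by positivity
  clear_value p a
  have hap1 : a * (p + 1) = c := by
    rw [hadef, hpdef]; field_simp; ring
  have hpυ : p * υ = p + 1 := by
    rw [hpdef]; field_simp; ring
  intro k
  induction k using Nat.strong_induction_on with
  | _ k IH =>
  intro hk
  have hBk := hB k hk
  -- first, c ≤ B k ^ (υ - 1)
  have hsum_ge_Bk : B k ≤ ∑ i ∈ Finset.Icc 1 k, B i :=
    Finset.single_le_sum (fun i hi => (hB i (Finset.mem_Icc.mp hi).1).le)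
      (Finset.mem_Icc.mpr ⟨hk, le_refl k⟩)
  have h1 : c * B k ≤ B k ^ υ := le_trans (by nlinarith) (h k hk)
  have hsplit : B k ^ υ = B k ^ (υ - 1) * B k := by
    rw [← Real.rpow_add_one hBk.ne']; ring_nf
  have h2 : c ≤ B k ^ (υ - 1) := by
    rw [hsplit] at h1
    exact (mul_le_mul_iff_of_pos_right hBk).mp h1
  by_contra hcon
  push_neg at hcon
  set y := (a * (k : ℝ)) ^ p with hydef
  have hak : 0 < a * (k : ℝ) := by
    have : (1 : ℝ) ≤ (k : ℝ) := by exact_mod_cast hk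
    nlinarith
  clear_value y
  have hy0 : 0 < y := hydef ▸ Real.rpow_pos_of_pos hak _
  -- convexity at B k evaluated at y
  have hconv := rpow_tangent_le (B k) y υ hBk hy0.le hυ.le
  obtain ⟨n, rfl⟩ : ∃ n, k = n + 1 := ⟨k - 1, by omega⟩
  -- lower bound for the sum
  have hsum : ∑ i ∈ Finset.Icc 1 (n + 1), B i = (∑ i ∈ Finset.Icc 1 n, B i) + B (n + 1) :=
    Finset.sum_Icc_succ_top (by omega) _
  have hterm : ∀ i ∈ Finset.Icc 1 n, (a * (i : ℝ)) ^ p ≤ B i := by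
    intro i hi
    obtain ⟨hi1, hi2⟩ := Finset.mem_Icc.mp hi
    exact IH i (by omega) hi1
  have hsum2 : ∑ i ∈ Finset.Icc 1 n, (a * (i : ℝ)) ^ p ≤ ∑ i ∈ Finset.Icc 1 n, B i :=
    Finset.sum_le_sum hterm
  have hfactor : ∑ i ∈ Finset.Icc 1 n, (a * (i : ℝ)) ^ p
      = a ^ p * ∑ i ∈ Finset.Icc 1 n, (i : ℝ) ^ p := by
    rw [Finset.mul_sum]
    exact Finset.sum_congr rfl fun i _ => Real.mul_rpow ha.le (Nat.cast_nonneg i)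
  have hsumlb := sum_rpow_lb p hp n
  have hap : 0 < a ^ p := Real.rpow_pos_of_pos ha _
  -- B k ^ υ ≥ a^(p+1) * n^(p+1) + c * B k, with a^(p+1) = a^p * a
  have hBlb : a ^ p * a * (n : ℝ) ^ (p + 1) + c * B (n + 1) ≤ B (n + 1) ^ υ := by
    have hA : c * ((∑ i ∈ Finset.Icc 1 n, B i) + B (n + 1)) ≤ B (n + 1) ^ υ := by
      rw [← hsum]; exact h (n + 1) (by omega)
    have hB1 : a ^ p * (n : ℝ) ^ (p + 1) ≤ (p + 1) * ∑ i ∈ Finset.Icc 1 n, B i := by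
      calc a ^ p * (n : ℝ) ^ (p + 1) ≤ a ^ p * ((p + 1) * ∑ i ∈ Finset.Icc 1 n, (i : ℝ) ^ p) :=
            mul_le_mul_of_nonneg_left hsumlb hap.le
        _ = (p + 1) * ∑ i ∈ Finset.Icc 1 n, (a * (i : ℝ)) ^ p := by rw [hfactor]; ring
        _ ≤ (p + 1) * ∑ i ∈ Finset.Icc 1 n, B i := by
            exact mul_le_mul_of_nonneg_left hsum2 (by linarith)
    nlinarith [hA, hB1]
  -- y ^ υ = (a * (n+1)) ^ (p + 1) and its upper bound
  have hyυ : y ^ υ = a ^ p * a * ((n : ℝ) + 1) ^ (p + 1) := by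
    rw [hydef, ← Real.rpow_mul hak.le, hpυ]
    push_cast
    rw [Real.mul_rpow ha.le (by positivity),
      show a ^ (p + 1) = a ^ p * a from Real.rpow_add_one ha.ne' p]
  have hx1 : (0 : ℝ) < (n : ℝ) + 1 := by positivity
  have hstep := rpow_tangent_le ((n : ℝ) + 1) (n : ℝ) (p + 1) hx1 (Nat.cast_nonneg n)
    (by linarith)
  rw [show p + 1 - 1 = p by ring] at hstep
  -- y = a^p * (n+1)^p
  have hyeq : y = a ^ p * ((n : ℝ) + 1) ^ p := by
    rw [hydef]
    push_cast
    exact Real.mul_rpow ha.le (by positivity)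
  -- y^υ ≤ a^p*a*n^(p+1) + c*y
  have hstep' : ((n : ℝ) + 1) ^ (p + 1) ≤ (n : ℝ) ^ (p + 1) + (p + 1) * ((n : ℝ) + 1) ^ p := by
    nlinarith [hstep]
  have hyub : y ^ υ ≤ a ^ p * a * (n : ℝ) ^ (p + 1) + c * y := by
    calc y ^ υ = a ^ p * a * ((n : ℝ) + 1) ^ (p + 1) := hyυ
      _ ≤ a ^ p * a * ((n : ℝ) ^ (p + 1) + (p + 1) * ((n : ℝ) + 1) ^ p) :=
          mul_le_mul_of_nonneg_left hstep' (mul_nonneg hap.le ha.le)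
      _ = a ^ p * a * (n : ℝ) ^ (p + 1) + a ^ p * (a * (p + 1)) * ((n : ℝ) + 1) ^ p := by ring
      _ = a ^ p * a * (n : ℝ) ^ (p + 1) + c * y := by rw [hap1, hyeq]; ring
  -- combine everything
  have hkey : c * (y - B (n + 1)) ≤ B (n + 1) ^ (υ - 1) * (y - B (n + 1)) :=
    mul_le_mul_of_nonneg_right h2 (sub_pos.mpr hcon).le
  nlinarith [hconv, hBlb, hyub, hkey, mul_pos hc (sub_pos.mpr hcon),
    mul_le_mul_of_nonneg_left hkey hυpos.le]
end

section
/- Let $f(x) = \frac{1}{n}\sum_{j=1}^n \log(1 + \exp(-\bar{b}_j \bar{a}_j^T x))$ with $\bar{a}_j \in \mathbb{R}^d$, $\bar{b}_j \in \{1,-1\}$, and $B := \frac{1}{n}\sum_j \bar{a}_j \bar{a}_j^T$. Then for every $x, h \in \mathbb{R}^d$, the third directional derivative satisfies $\nabla^3 f(x)[h,h,h] \le (h^T B h) \cdot \max_{j \in [n]} |\langle \bar{a}_j, h \rangle|$. -/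
noncomputable def gL : ℝ → ℝ := fun s => Real.log (1 + Real.exp (-s))
noncomputable def gL1 : ℝ → ℝ := fun s => -Real.exp (-s) / (1 + Real.exp (-s))
noncomputable def gL2 : ℝ → ℝ := fun s => Real.exp (-s) / (1 + Real.exp (-s)) ^ 2
noncomputable def gL3 : ℝ → ℝ :=
  fun s => (-Real.exp (-s) + Real.exp (-s) ^ 2) / (1 + Real.exp (-s)) ^ 3

lemma expneg_hasDeriv (s : ℝ) :
    HasDerivAt (fun t : ℝ => Real.exp (-t)) (-Real.exp (-s)) s := by
  simpa [Function.comp_def] using (Real.hasDerivAt_exp (-s)).comp s ((hasDerivAt_id s).neg)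

lemma one_add_pos (s : ℝ) : (0:ℝ) < 1 + Real.exp (-s) := by positivity

lemma gL_hasDeriv (s : ℝ) : HasDerivAt gL (gL1 s) s := by
  have h := ((expneg_hasDeriv s).const_add 1).log (ne_of_gt (one_add_pos s))
  unfold gL
  simpa [gL1, neg_div] using h

lemma gL1_hasDeriv (s : ℝ) : HasDerivAt gL1 (gL2 s) s := by
  have h := ((expneg_hasDeriv s).neg).div ((expneg_hasDeriv s).const_add 1)
    (ne_of_gt (one_add_pos s))
  refine h.congr_deriv ?_
  have := (one_add_pos s).ne'
  simp only [gL2, Pi.neg_apply, Pi.pow_apply]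
  field_simp
  ring

lemma gL2_hasDeriv (s : ℝ) : HasDerivAt gL2 (gL3 s) s := by
  have h := (expneg_hasDeriv s).div (((expneg_hasDeriv s).const_add 1).pow 2)
    (pow_ne_zero 2 (one_add_pos s).ne')
  refine h.congr_deriv ?_
  have := (one_add_pos s).ne'
  simp only [gL3, Pi.neg_apply, Pi.pow_apply]
  field_simp
  ring

lemma gL_contDiff : ContDiff ℝ 3 gL := by
  apply ContDiff.log
  · exact contDiff_const.add (Real.contDiff_exp.comp contDiff_neg)
  · exact fun s => (one_add_pos s).ne'

lemma gL_iteratedDeriv (t : ℝ) : iteratedDeriv 3 gL t = gL3 t := by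
  have e1 : deriv gL = gL1 := funext fun s => (gL_hasDeriv s).deriv
  have e2 : deriv gL1 = gL2 := funext fun s => (gL1_hasDeriv s).deriv
  have e3 : deriv gL2 = gL3 := funext fun s => (gL2_hasDeriv s).deriv
  rw [show (3:ℕ) = 2 + 1 from rfl, iteratedDeriv_succ', e1,
    show (2:ℕ) = 1 + 1 from rfl, iteratedDeriv_succ', e2, iteratedDeriv_one, e3]

lemma gL3_abs_le (t : ℝ) : |gL3 t| ≤ 1 := by
  have hy : 0 < Real.exp (-t) := Real.exp_pos _
  set y := Real.exp (-t) with hyd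
  rw [show gL3 t = (-y + y^2)/(1+y)^3 from rfl, abs_div, abs_of_pos (by positivity : (0:ℝ) < (1+y)^3), div_le_one (by positivity)]
  have : |(-y + y^2)| ≤ y + y^2 := by
    rw [abs_le]; constructor <;> nlinarith
  nlinarith [this]

theorem stmt_11 {d n : ℕ} (hn : 0 < n)
    (a : Fin n → EuclideanSpace ℝ (Fin d)) (b : Fin n → ℝ)
    (hb : ∀ j, b j = 1 ∨ b j = -1)
    (x h : EuclideanSpace ℝ (Fin d)) :
    iteratedFDeriv ℝ 3
        (fun z => (1 / (n : ℝ)) *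
          ∑ j, Real.log (1 + Real.exp (-(b j) * (inner ℝ (a j) z : ℝ)))) x
        (fun _ => h)
      ≤ ((1 / (n : ℝ)) * ∑ j, (inner ℝ (a j) h : ℝ) ^ 2) *
          ⨆ j, |(inner ℝ (a j) h : ℝ)| := by
  haveI : Nonempty (Fin n) := ⟨⟨0, hn⟩⟩
  set L : Fin n → (EuclideanSpace ℝ (Fin d) →L[ℝ] ℝ) :=
    fun j => (b j) • (innerSL ℝ (a j)) with hL
  have hLapp : ∀ j z, L j z = b j * (inner ℝ (a j) z : ℝ) := by
    intro j z; simp [hL]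
  have hcomp : ∀ j, ContDiff ℝ 3 (gL ∘ (L j)) :=
    fun j => gL_contDiff.comp (L j).contDiff
  have hfun : (fun z => (1 / (n : ℝ)) *
        ∑ j, Real.log (1 + Real.exp (-(b j) * (inner ℝ (a j) z : ℝ))))
      = fun z => (1 / (n : ℝ)) • ∑ j, (gL ∘ (L j)) z := by
    funext z
    simp only [smul_eq_mul, Function.comp_apply, gL, hLapp, neg_mul]
  rw [hfun]
  have hS : ContDiff ℝ 3 (fun z => ∑ j, (gL ∘ (L j)) z) :=
    ContDiff.sum fun j _ => hcomp j
  rw [iteratedFDeriv_const_smul_apply' hS.contDiffAt]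
  rw [iteratedFDeriv_sum (fun j _ => hcomp j)]
  simp only [ContinuousMultilinearMap.smul_apply, Finset.sum_apply, ContinuousMultilinearMap.sum_apply,
    smul_eq_mul]
  have hterm : ∀ j, iteratedFDeriv ℝ 3 (gL ∘ (L j)) x (fun _ => h)
      = (L j h) ^ 3 * gL3 (L j x) := by
    intro j
    rw [(L j).iteratedFDeriv_comp_right gL_contDiff x le_rfl]
    rw [ContinuousMultilinearMap.compContinuousLinearMap_apply]
    rw [iteratedFDeriv_apply_eq_iteratedDeriv_mul_prod, gL_iteratedDeriv]
    simp [smul_eq_mul, pow_succ, mul_comm]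
  have habs : ∀ j, |L j h| = |(inner ℝ (a j) h : ℝ)| := by
    intro j
    rw [hLapp, abs_mul]
    rcases hb j with hbj | hbj <;> simp [hbj]
  have hsupb : BddAbove (Set.range fun j => |(inner ℝ (a j) h : ℝ)|) :=
    Set.Finite.bddAbove (Set.finite_range _)
  have hbound : ∀ j, iteratedFDeriv ℝ 3 (gL ∘ (L j)) x (fun _ => h)
      ≤ (inner ℝ (a j) h : ℝ) ^ 2 * ⨆ i, |(inner ℝ (a i) h : ℝ)| := by
    intro j
    rw [hterm j]
    have h1 : (L j h) ^ 3 * gL3 (L j x) ≤ |L j h| ^ 3 := by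
      calc (L j h) ^ 3 * gL3 (L j x) ≤ |(L j h) ^ 3 * gL3 (L j x)| := le_abs_self _
        _ = |L j h| ^ 3 * |gL3 (L j x)| := by rw [abs_mul, abs_pow]
        _ ≤ |L j h| ^ 3 * 1 := by
            exact mul_le_mul_of_nonneg_left (gL3_abs_le _) (by positivity)
        _ = |L j h| ^ 3 := mul_one _
    refine h1.trans ?_
    rw [habs j]
    have h2 : |(inner ℝ (a j) h : ℝ)| ^ 3
        = (inner ℝ (a j) h : ℝ) ^ 2 * |(inner ℝ (a j) h : ℝ)| := by
      rw [show (3:ℕ) = 2 + 1 from rfl, pow_succ, sq_abs]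
    rw [h2]
    exact mul_le_mul_of_nonneg_left (le_ciSup hsupb j) (sq_nonneg _)
  calc (1 / (n : ℝ)) * ∑ j, iteratedFDeriv ℝ 3 (gL ∘ (L j)) x (fun _ => h)
      ≤ (1 / (n : ℝ)) * ∑ j, (inner ℝ (a j) h : ℝ) ^ 2 * ⨆ i, |(inner ℝ (a i) h : ℝ)| := by
        refine mul_le_mul_of_nonneg_left ?_ (by positivity)
        exact Finset.sum_le_sum fun j _ => hbound j
    _ = ((1 / (n : ℝ)) * ∑ j, (inner ℝ (a j) h : ℝ) ^ 2) * ⨆ j, |(inner ℝ (a j) h : ℝ)| := by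
        rw [← Finset.sum_mul, mul_assoc]
end
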